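/- Suppose g12 ≥ g22 μ-almost everywhere and g21 ≥ g11 μ-almost everywhere (uniformly strong IFC). Then S4(0,p) ≥ S1(0,p), S5(0,p) ≥ min(S1(0,p), S2(0,p)), and S6(0,p) ≥ min(S1(0,p), S3(0,p)); consequently min over j ∈ {1,...,6} of S_j(0,p) equals min(S1(0,p), S2(0,p), S3(0,p)). -/

import Mathlib

/-! Under the strong-interference conditions each cross link is a.e. at least as strong as the
corresponding direct link, so by monotonicity of `C` every `E[C(g_cross p)]` dominates the matching
`E[C(g_direct p)]`. This gives `S1 ≤ S4` at once, and `S5`, `S6` dominate the averages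
`(S1 + S2)/2`, `(S1 + S3)/2`, hence the minima. The last claim is then pure lattice
bookkeeping. -/

open MeasureTheory

noncomputable def C (x : ℝ) : ℝ := Real.logb 2 (1 + x)

lemma C_le_C {x y : ℝ} (hx : -1 < x) (h : x ≤ y) : C x ≤ C y :=
  Real.logb_le_logb_of_le one_lt_two (by linarith) (by linarith)

lemma integral_C_mul_le_integral_C_mul {Ω : Type*} [MeasurableSpace Ω] {μ : Measure Ω}
    {a b q : Ω → ℝ} (ha : ∀ ω, 0 ≤ a ω) (hq : ∀ ω, 0 ≤ q ω) (hab : ∀ᵐ ω ∂μ, a ω ≤ b ω)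
    (hia : Integrable (fun ω => C (a ω * q ω)) μ) (hib : Integrable (fun ω => C (b ω * q ω)) μ) :
    ∫ ω, C (a ω * q ω) ∂μ ≤ ∫ ω, C (b ω * q ω) ∂μ :=
  integral_mono_ae hia hib <| hab.mono fun ω h =>
    C_le_C (by linarith [mul_nonneg (ha ω) (hq ω)]) (mul_le_mul_of_nonneg_right h (hq ω))

lemma min_le_add_div_two {α : Type*} [Field α] [LinearOrder α] [IsStrictOrderedRing α]
    (a b : α) : min a b ≤ (a + b) / 2 := by
  linarith [min_le_left a b, min_le_right a b]

lemma min_six_eq_min_three {α : Type*} [LinearOrder α] {s₁ s₂ s₃ s₄ s₅ s₆ : α}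
    (h₄ : s₁ ≤ s₄) (h₅ : min s₁ s₂ ≤ s₅) (h₆ : min s₁ s₃ ≤ s₆) :
    min s₁ (min s₂ (min s₃ (min s₄ (min s₅ s₆)))) = min s₁ (min s₂ s₃) := by
  refine le_antisymm (min_le_min le_rfl (min_le_min le_rfl (min_le_left _ _))) ?_
  simp only [le_min_iff, min_le_iff, le_refl, true_or, or_true, true_and] at *
  tauto

theorem stmt2_general {Ω : Type*} [MeasurableSpace Ω] (μ : Measure Ω)
    (g11 g12 g21 g22 p1 p2 : Ω → ℝ)
    (hg11n : ∀ ω, 0 ≤ g11 ω)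
    (hg22n : ∀ ω, 0 ≤ g22 ω)
    (hp1n : ∀ ω, 0 ≤ p1 ω) (hp2n : ∀ ω, 0 ≤ p2 ω)
    (hUS1 : ∀ᵐ ω ∂μ, g22 ω ≤ g12 ω) (hUS2 : ∀ᵐ ω ∂μ, g11 ω ≤ g21 ω)
    (hI1 : Integrable (fun ω => C (g11 ω * p1 ω)) μ)
    (hI2 : Integrable (fun ω => C (g22 ω * p2 ω)) μ)
    (hI5 : Integrable (fun ω => C (g12 ω * p2 ω)) μ)
    (hI6 : Integrable (fun ω => C (g21 ω * p1 ω)) μ)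
    (S1 S2 S3 S4 S5 S6 : ℝ)
    (hS1 : S1 = (∫ ω, C (g11 ω * p1 ω) ∂μ) + ∫ ω, C (g22 ω * p2 ω) ∂μ)
    (hS2 : S2 = ∫ ω, C (g11 ω * p1 ω + g12 ω * p2 ω) ∂μ)
    (hS3 : S3 = ∫ ω, C (g21 ω * p1 ω + g22 ω * p2 ω) ∂μ)
    (hS4 : S4 = (∫ ω, C (g12 ω * p2 ω) ∂μ) + ∫ ω, C (g21 ω * p1 ω) ∂μ)
    (hS5 : S5 = ((∫ ω, C (g11 ω * p1 ω + g12 ω * p2 ω) ∂μ)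
        + (∫ ω, C (g21 ω * p1 ω) ∂μ) + ∫ ω, C (g22 ω * p2 ω) ∂μ) / 2)
    (hS6 : S6 = ((∫ ω, C (g21 ω * p1 ω + g22 ω * p2 ω) ∂μ)
        + (∫ ω, C (g12 ω * p2 ω) ∂μ) + ∫ ω, C (g11 ω * p1 ω) ∂μ) / 2) :
    S1 ≤ S4 ∧ min S1 S2 ≤ S5 ∧ min S1 S3 ≤ S6 ∧
      min S1 (min S2 (min S3 (min S4 (min S5 S6)))) = min S1 (min S2 S3) := by
  have h₁ := integral_C_mul_le_integral_C_mul hg11n hp1n hUS2 hI1 hI6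
  have h₂ := integral_C_mul_le_integral_C_mul hg22n hp2n hUS1 hI2 hI5
  have h₄ : S1 ≤ S4 := by rw [hS1, hS4]; linarith
  have h₅ : min S1 S2 ≤ S5 :=
    (min_le_add_div_two S1 S2).trans (by rw [hS1, hS2, hS5]; linarith)
  have h₆ : min S1 S3 ≤ S6 :=
    (min_le_add_div_two S1 S3).trans (by rw [hS1, hS3, hS6]; linarith)
  exact ⟨h₄, h₅, h₆, min_six_eq_min_three h₄ h₅ h₆⟩

/-- For a uniformly strong ergodic fading IFC (`g12 ≥ g22` and `g21 ≥ g11` a.e.),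
with all-common power split, `S4(0,p) ≥ S1(0,p)`, `S5(0,p) ≥ min(S1(0,p), S2(0,p))`,
`S6(0,p) ≥ min(S1(0,p), S3(0,p))`, and consequently
`min_{j∈{1,…,6}} S_j(0,p) = min(S1(0,p), S2(0,p), S3(0,p))`. -/
theorem stmt2 {Ω : Type*} [MeasurableSpace Ω] (μ : Measure Ω) [IsProbabilityMeasure μ]
    (g11 g12 g21 g22 p1 p2 : Ω → ℝ)
    (hg11 : Measurable g11) (hg12 : Measurable g12)
    (hg21 : Measurable g21) (hg22 : Measurable g22)
    (hp1 : Measurable p1) (hp2 : Measurable p2)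
    (hg11n : ∀ ω, 0 ≤ g11 ω) (hg12n : ∀ ω, 0 ≤ g12 ω)
    (hg21n : ∀ ω, 0 ≤ g21 ω) (hg22n : ∀ ω, 0 ≤ g22 ω)
    (hp1n : ∀ ω, 0 ≤ p1 ω) (hp2n : ∀ ω, 0 ≤ p2 ω)
    (hUS1 : ∀ᵐ ω ∂μ, g22 ω ≤ g12 ω) (hUS2 : ∀ᵐ ω ∂μ, g11 ω ≤ g21 ω)
    (hI1 : Integrable (fun ω => C (g11 ω * p1 ω)) μ)
    (hI2 : Integrable (fun ω => C (g22 ω * p2 ω)) μ)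
    (hI3 : Integrable (fun ω => C (g11 ω * p1 ω + g12 ω * p2 ω)) μ)
    (hI4 : Integrable (fun ω => C (g21 ω * p1 ω + g22 ω * p2 ω)) μ)
    (hI5 : Integrable (fun ω => C (g12 ω * p2 ω)) μ)
    (hI6 : Integrable (fun ω => C (g21 ω * p1 ω)) μ)
    (S1 S2 S3 S4 S5 S6 : ℝ)
    (hS1 : S1 = (∫ ω, C (g11 ω * p1 ω) ∂μ) + ∫ ω, C (g22 ω * p2 ω) ∂μ)
    (hS2 : S2 = ∫ ω, C (g11 ω * p1 ω + g12 ω * p2 ω) ∂μ)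
    (hS3 : S3 = ∫ ω, C (g21 ω * p1 ω + g22 ω * p2 ω) ∂μ)
    (hS4 : S4 = (∫ ω, C (g12 ω * p2 ω) ∂μ) + ∫ ω, C (g21 ω * p1 ω) ∂μ)
    (hS5 : S5 = ((∫ ω, C (g11 ω * p1 ω + g12 ω * p2 ω) ∂μ)
        + (∫ ω, C (g21 ω * p1 ω) ∂μ) + ∫ ω, C (g22 ω * p2 ω) ∂μ) / 2)
    (hS6 : S6 = ((∫ ω, C (g21 ω * p1 ω + g22 ω * p2 ω) ∂μ)
        + (∫ ω, C (g12 ω * p2 ω) ∂μ) + ∫ ω, C (g11 ω * p1 ω) ∂μ) / 2) :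
    S1 ≤ S4 ∧ min S1 S2 ≤ S5 ∧ min S1 S3 ≤ S6 ∧
      min S1 (min S2 (min S3 (min S4 (min S5 S6)))) = min S1 (min S2 S3) :=
  stmt2_general μ g11 g12 g21 g22 p1 p2 hg11n hg22n hp1n hp2n hUS1 hUS2 hI1 hI2 hI5 hI6 S1 S2 S3 S4
    S5 S6 hS1 hS2 hS3 hS4 hS5 hS6
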